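/- Fix d ∈ ℕ+, α > 0 and constants c > 0, C̄ > 0. Assume the squared-exponential-type information-gain bound: for every m ∈ ℕ+, every λ > 0 and every m-tuple Z of points of 𝒳, I_{λ²I_m}(Z) ≤ C̄·(ln(1 + m/λ²))^{d+1}. Let (λ̄_T)_{T∈ℕ+} be strictly positive reals with λ̄_T² ≥ c·exp(−T^{1/(d+1)}·(ln(1+T))^{−α}) for all T ∈ ℕ+, and for each T let x_{T,1},…,x_{T,T} ∈ 𝒳̃ (a nonempty subset of 𝒳) be chosen by maximum variance reduction with noise level λ̄_T²: for every t ∈ [T] and x ∈ 𝒳̃, σ_{λ̄_T²I_{t−1}}(x; X_{T,t−1}) ≤ σ_{λ̄_T²I_{t−1}}(x_{T,t}; X_{T,t−1}). Then there exists T̄ ∈ ℕ+, depending only on c, C̄, α, d, such that for every T ≥ T̄ and every x ∈ 𝒳̃: σ_{λ̄_T²I_T}(x; X_{T,T}) ≤ (4/T)·√( λ̄_T²·T·C̄·(ln(1 + T/λ̄_T²))^{d+1} ). -/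

import Mathlib

open Matrix Real Finset

noncomputable section

universe u

/-- Gram (kernel) matrix of a finite tuple of points. -/
def gramMat {𝒳 : Type u} (k : 𝒳 → 𝒳 → ℝ) {m : ℕ} (X : Fin m → 𝒳) :
    Matrix (Fin m) (Fin m) ℝ :=
  Matrix.of fun i j => k (X i) (X j)

/-- Kernel vector `k(x, X)`. -/
def kVec {𝒳 : Type u} (k : 𝒳 → 𝒳 → ℝ) {m : ℕ} (X : Fin m → 𝒳) (x : 𝒳) : Fin m → ℝ :=
  fun i => k x (X i)

/-- Posterior variance `σ²_Σ(x; X)`. -/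
def postVar {𝒳 : Type u} (k : 𝒳 → 𝒳 → ℝ) {m : ℕ} (S : Matrix (Fin m) (Fin m) ℝ)
    (X : Fin m → 𝒳) (x : 𝒳) : ℝ :=
  k x x - kVec k X x ⬝ᵥ ((gramMat k X + S)⁻¹ *ᵥ kVec k X x)

/-- Posterior standard deviation `σ_Σ(x; X)`. -/
def postStd {𝒳 : Type u} (k : 𝒳 → 𝒳 → ℝ) {m : ℕ} (S : Matrix (Fin m) (Fin m) ℝ)
    (X : Fin m → 𝒳) (x : 𝒳) : ℝ :=
  Real.sqrt (postVar k S X x)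

/-- Posterior mean `μ_Σ(x; X, y)`. -/
def postMean {𝒳 : Type u} (k : 𝒳 → 𝒳 → ℝ) {m : ℕ} (S : Matrix (Fin m) (Fin m) ℝ)
    (X : Fin m → 𝒳) (y : Fin m → ℝ) (x : 𝒳) : ℝ :=
  kVec k X x ⬝ᵥ ((gramMat k X + S)⁻¹ *ᵥ y)

/-- Information gain `I_Σ(Z)`. -/
def infoGain {𝒳 : Type u} (k : 𝒳 → 𝒳 → ℝ) {m : ℕ} (S : Matrix (Fin m) (Fin m) ℝ)
    (Z : Fin m → 𝒳) : ℝ :=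
  (1 / 2) * Real.log ((S + gramMat k Z).det / S.det)

/-- `k` is a symmetric positive semidefinite kernel. -/
def IsKernel {𝒳 : Type u} (k : 𝒳 → 𝒳 → ℝ) : Prop :=
  (∀ x y, k x y = k y x) ∧ ∀ (m : ℕ) (Z : Fin m → 𝒳), (gramMat k Z).PosSemidef

/-- Prefix of length `t` of a sequence of points. -/
def preT {𝒳 : Type u} (x : ℕ → 𝒳) (t : ℕ) : Fin t → 𝒳 := fun i => x i.val

/-!
The posterior variance `σ²_t(x)` given the first `t` points is the minimum over `w` of
`‖k(·, x) - ∑ᵢ wᵢ k(·, xᵢ)‖² + ν ‖w‖²`; hence it is nonnegative and can only decrease as points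
are added. Taking the Schur complement of the last point gives the chain rule
`2 I(X_T) = ∑_{t < T} log (1 + σ²_t(x_{t+1}) / ν)`. Under maximum variance reduction every
summand dominates `log (1 + σ²_T(x) / ν)`, so `T log (1 + σ²_T(x) / ν) ≤ 2 γ_T` with
`γ_T = C̄ (log (1 + T / ν))^(d+1)`. The lower bound on `ν = λ̄_T²` makes `log (1 + T / ν)` of
order `o(T^(1/(d+1)))`, so `2 γ_T ≤ T` for large `T`, and `log (1 + z) ≤ y ≤ 1 ⇒ z ≤ 2 y`
yields `σ²_T(x) ≤ 4 ν γ_T / T`.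
-/

open Filter Asymptotics

namespace Matrix

variable {n : Type*} [Fintype n]

theorem PosDef.two_mul_dotProduct_sub_le [DecidableEq n] {A : Matrix n n ℝ} (hA : A.PosDef)
    (u w : n → ℝ) :
    2 * (u ⬝ᵥ w) - w ⬝ᵥ (A *ᵥ w) ≤ u ⬝ᵥ (A⁻¹ *ᵥ u) := by
  set v := A⁻¹ *ᵥ u
  have hAv : A *ᵥ v = u := by
    rw [mulVec_mulVec, mul_nonsing_inv _ (isUnit_iff_ne_zero.2 hA.det_pos.ne'), one_mulVec]
  have hsymm : v ⬝ᵥ (A *ᵥ w) = u ⬝ᵥ w := by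
    rw [dotProduct_mulVec, ← mulVec_transpose, show Aᵀ = A from hA.isHermitian, hAv]
  have hnonneg : 0 ≤ (w - v) ⬝ᵥ (A *ᵥ (w - v)) := by
    simpa using hA.posSemidef.dotProduct_mulVec_nonneg (w - v)
  simp only [mulVec_sub, dotProduct_sub, sub_dotProduct, hAv, hsymm] at hnonneg
  rw [dotProduct_comm w u, dotProduct_comm v u] at hnonneg
  linarith

theorem dotProduct_extend_zero {m : Type*} [Fintype m] {f : m → n} (hf : f.Injective)
    (w : m → ℝ) (v : n → ℝ) : Function.extend f w 0 ⬝ᵥ v = w ⬝ᵥ (v ∘ f) := by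
  refine (Fintype.sum_of_injective f hf _ _ (fun i hi => ?_) fun j => ?_).symm
  · rw [Function.extend_apply' _ _ _ hi, Pi.zero_apply, zero_mul]
  · rw [hf.extend_apply, Function.comp_apply]

theorem submatrix_mulVec_eq_mulVec_extend_zero {m : Type*} [Fintype m] {f : m → n}
    (hf : f.Injective) (A : Matrix n n ℝ) (w : m → ℝ) :
    A.submatrix f f *ᵥ w = (A *ᵥ Function.extend f w 0) ∘ f := by
  ext j
  simp only [Function.comp_apply, mulVec, dotProduct_comm (A (f j)), dotProduct_extend_zero hf]
  exact dotProduct_comm _ _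

end Matrix

section PosteriorVariance

variable {𝒳 : Type u} {k : 𝒳 → 𝒳 → ℝ} {m : ℕ}

/-- `‖k(·, x) - ∑ᵢ wᵢ k(·, Xᵢ)‖² + ν ‖w‖²`, the norm taken in the RKHS of `k`. -/
def ridgeLoss (k : 𝒳 → 𝒳 → ℝ) (ν : ℝ) (X : Fin m → 𝒳) (x : 𝒳) (w : Fin m → ℝ) : ℝ :=
  k x x - 2 * (kVec k X x ⬝ᵥ w) + w ⬝ᵥ ((gramMat k X + ν • 1) *ᵥ w)

theorem IsKernel.posDef_gramMat_add_smul_one (hk : IsKernel k) (X : Fin m → 𝒳) {ν : ℝ}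
    (hν : 0 < ν) : (gramMat k X + ν • (1 : Matrix (Fin m) (Fin m) ℝ)).PosDef :=
  Matrix.PosDef.posSemidef_add (hk.2 m X) (Matrix.PosDef.one.smul hν)

theorem ridgeLoss_nonneg (hk : IsKernel k) {ν : ℝ} (hν : 0 ≤ ν) (X : Fin m → 𝒳) (x : 𝒳)
    (w : Fin m → ℝ) : 0 ≤ ridgeLoss k ν X x w := by
  have hbordered : star (Fin.cons (-1) w) ⬝ᵥ (gramMat k (Fin.cons x X) *ᵥ Fin.cons (-1) w)
      = k x x - 2 * (kVec k X x ⬝ᵥ w) + w ⬝ᵥ (gramMat k X *ᵥ w) := by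
    simp only [star_trivial, dotProduct, mulVec, gramMat, kVec, of_apply, Fin.sum_univ_succ,
      Fin.cons_zero, Fin.cons_succ, hk.1 (X _) x, mul_add, sum_add_distrib,
      mul_sum]
    simp only [neg_mul, one_mul, mul_neg, mul_one, mul_comm (w _) (k x (X _))]
    rw [sum_neg_distrib, ← mul_sum]
    ring
  have hgram := (hk.2 (m + 1) (Fin.cons x X)).dotProduct_mulVec_nonneg (Fin.cons (-1) w)
  have hridge : 0 ≤ ν * (w ⬝ᵥ w) := mul_nonneg hν (by simpa using dotProduct_star_self_nonneg w)
  rw [hbordered] at hgram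
  rw [ridgeLoss, add_mulVec, dotProduct_add, smul_mulVec, one_mulVec, dotProduct_smul,
    smul_eq_mul]
  linarith

theorem postVar_le_ridgeLoss (hk : IsKernel k) {ν : ℝ} (hν : 0 < ν) (X : Fin m → 𝒳) (x : 𝒳)
    (w : Fin m → ℝ) : postVar k (ν • 1) X x ≤ ridgeLoss k ν X x w := by
  have := (hk.posDef_gramMat_add_smul_one X hν).two_mul_dotProduct_sub_le (kVec k X x) w
  rw [postVar, ridgeLoss]
  linarith

theorem postVar_eq_ridgeLoss (hk : IsKernel k) {ν : ℝ} (hν : 0 < ν) (X : Fin m → 𝒳) (x : 𝒳) :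
    postVar k (ν • 1) X x
      = ridgeLoss k ν X x ((gramMat k X + ν • 1)⁻¹ *ᵥ kVec k X x) := by
  have hAv : (gramMat k X + ν • 1) *ᵥ ((gramMat k X + ν • 1)⁻¹ *ᵥ kVec k X x) = kVec k X x := by
    rw [mulVec_mulVec, mul_nonsing_inv _
      (isUnit_iff_ne_zero.2 (hk.posDef_gramMat_add_smul_one X hν).det_pos.ne'), one_mulVec]
  rw [postVar, ridgeLoss, hAv, dotProduct_comm _ (kVec k X x)]
  ring

theorem postVar_nonneg (hk : IsKernel k) {ν : ℝ} (hν : 0 < ν) (X : Fin m → 𝒳) (x : 𝒳) :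
    0 ≤ postVar k (ν • 1) X x :=
  postVar_eq_ridgeLoss hk hν X x ▸ ridgeLoss_nonneg hk hν.le X x _

theorem ridgeLoss_comp {n : ℕ} {f : Fin m → Fin n} (hf : f.Injective) (ν : ℝ)
    (X : Fin n → 𝒳) (x : 𝒳) (w : Fin m → ℝ) :
    ridgeLoss k ν (X ∘ f) x w = ridgeLoss k ν X x (Function.extend f w 0) := by
  have hA : gramMat k (X ∘ f) + ν • 1 = (gramMat k X + ν • 1).submatrix f f := by
    ext i j
    simp [gramMat, one_apply, hf.eq_iff]
  have hb : kVec k (X ∘ f) x = kVec k X x ∘ f := rfl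
  rw [ridgeLoss, ridgeLoss, hA, hb, submatrix_mulVec_eq_mulVec_extend_zero hf,
    ← dotProduct_extend_zero hf, dotProduct_comm _ w, ← dotProduct_extend_zero hf,
    dotProduct_comm (Function.extend f w 0)]

theorem postVar_le_postVar_comp (hk : IsKernel k) {ν : ℝ} (hν : 0 < ν) {n : ℕ}
    (X : Fin n → 𝒳) {f : Fin m → Fin n} (hf : f.Injective) (x : 𝒳) :
    postVar k (ν • 1) X x ≤ postVar k (ν • 1) (X ∘ f) x := by
  rw [postVar_eq_ridgeLoss hk hν (X ∘ f), ridgeLoss_comp hf]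
  exact postVar_le_ridgeLoss hk hν X x _

end PosteriorVariance

section InformationGain

variable {𝒳 : Type u} {k : 𝒳 → 𝒳 → ℝ} {ν : ℝ}

/-- Schur complement of the last diagonal entry of the regularised Gram matrix. -/
theorem det_gramMat_add_smul_one_succ (hk : IsKernel k) (hν : 0 < ν) {n : ℕ}
    (X : Fin (n + 1) → 𝒳) :
    (gramMat k X + ν • 1).det = (gramMat k (Fin.init X) + ν • 1).det
      * (ν + postVar k (ν • 1) (Fin.init X) (X (Fin.last n))) := by
  set B := gramMat k (Fin.init X) + ν • (1 : Matrix (Fin n) (Fin n) ℝ)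
  set b := kVec k (Fin.init X) (X (Fin.last n))
  have : Invertible B := B.invertibleOfIsUnitDet
    (isUnit_iff_ne_zero.2 (hk.posDef_gramMat_add_smul_one _ hν).det_pos.ne')
  have hblocks : (gramMat k X + ν • 1).submatrix finSumFinEquiv finSumFinEquiv
      = fromBlocks B (replicateCol (Fin 1) b) (replicateRow (Fin 1) b)
          (of fun _ _ => k (X (Fin.last n)) (X (Fin.last n)) + ν) := by
    have hl : ∀ i : Fin n, finSumFinEquiv (Sum.inl i : Fin n ⊕ Fin 1) = i.castSucc :=
      fun _ => rfl
    have hr : ∀ j : Fin 1, finSumFinEquiv (Sum.inr j : Fin n ⊕ Fin 1) = Fin.last n :=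
      fun j => by rw [Fin.fin_one_eq_zero j]; rfl
    ext (i | i) (j | j) <;>
      simp only [submatrix_apply, hl, hr, fromBlocks_apply₁₁, fromBlocks_apply₁₂,
        fromBlocks_apply₂₁, fromBlocks_apply₂₂, replicateCol_apply, replicateRow_apply,
        Matrix.add_apply, Matrix.smul_apply, of_apply, one_apply, Fin.castSucc_inj,
        Fin.castSucc_ne_last, (Fin.castSucc_ne_last _).symm, if_true, if_false, smul_eq_mul,
        mul_one, mul_zero, add_zero, gramMat, kVec, Fin.init, B, b]
    exact hk.1 _ _
  rw [← det_submatrix_equiv_self finSumFinEquiv, hblocks, det_fromBlocks₁₁,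
    invOf_eq_nonsing_inv, det_fin_one, Matrix.sub_apply, Matrix.mul_assoc,
    ← replicateCol_mulVec, replicateRow_mul_replicateCol_apply, of_apply]
  change _ = B.det * (ν + (k (X (Fin.last n)) (X (Fin.last n)) - b ⬝ᵥ (B⁻¹ *ᵥ b)))
  ring

theorem det_gramMat_preT_add_smul_one (hk : IsKernel k) (hν : 0 < ν) (x : ℕ → 𝒳) (n : ℕ) :
    (gramMat k (preT x n) + ν • 1).det
      = ∏ t ∈ range n, (ν + postVar k (ν • 1) (preT x t) (x t)) := by
  induction n with
  | zero => simp
  | succ n ih => rw [det_gramMat_add_smul_one_succ hk hν, prod_range_succ, ← ih]; rfl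

theorem two_mul_infoGain_preT (hk : IsKernel k) (hν : 0 < ν) (x : ℕ → 𝒳) (n : ℕ) :
    2 * infoGain k (ν • 1) (preT x n)
      = ∑ t ∈ range n, log (1 + postVar k (ν • 1) (preT x t) (x t) / ν) := by
  have hpos : ∀ t, 0 < ν + postVar k (ν • 1) (preT x t) (x t) :=
    fun t => add_pos_of_pos_of_nonneg hν (postVar_nonneg hk hν _ _)
  have hνn : ν ^ n = ∏ _t ∈ range n, ν := by rw [prod_const, card_range]
  rw [infoGain, add_comm, det_gramMat_preT_add_smul_one hk hν, det_smul, det_one, mul_one,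
    Fintype.card_fin, hνn, ← prod_div_distrib, log_prod fun t _ => (div_pos (hpos t) hν).ne',
    ← mul_assoc, mul_one_div_cancel two_ne_zero, one_mul]
  refine sum_congr rfl fun t _ => ?_
  rw [add_div, div_self hν.ne']

theorem card_mul_log_le_two_mul_infoGain (hk : IsKernel k) (hν : 0 < ν) (x : ℕ → 𝒳) (n : ℕ) (y : 𝒳)
    (hmax : ∀ t < n, postVar k (ν • 1) (preT x t) y ≤ postVar k (ν • 1) (preT x t) (x t)) :
    n * log (1 + postVar k (ν • 1) (preT x n) y / ν) ≤ 2 * infoGain k (ν • 1) (preT x n) := by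
  have hconst : (n : ℝ) * log (1 + postVar k (ν • 1) (preT x n) y / ν)
      = ∑ _t ∈ range n, log (1 + postVar k (ν • 1) (preT x n) y / ν) := by
    rw [sum_const, card_range, nsmul_eq_mul]
  rw [two_mul_infoGain_preT hk hν, hconst]
  refine sum_le_sum fun t ht => ?_
  have hshrink : postVar k (ν • 1) (preT x n) y ≤ postVar k (ν • 1) (preT x t) y :=
    postVar_le_postVar_comp hk hν (preT x n) (Fin.castLE_injective (mem_range.1 ht).le) y
  refine log_le_log (add_pos_of_pos_of_nonneg one_pos
    (div_nonneg (postVar_nonneg hk hν _ _) hν.le)) ?_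
  gcongr
  exact hshrink.trans (hmax t (mem_range.1 ht))

end InformationGain

theorem le_two_mul_of_log_one_add_le {z y : ℝ} (hz : 0 ≤ z) (hy : y ≤ 1)
    (h : log (1 + z) ≤ y) : z ≤ 2 * y := by
  have hy0 : 0 ≤ y := (log_nonneg (by linarith)).trans h
  have hexp : exp y ≤ 1 + 2 * y := by
    have := exp_bound' hy0 hy one_pos
    norm_num at this
    linarith
  have := (log_le_iff_le_exp (by linarith)).1 h
  linarith

theorem log_one_add_div_le {x ν c β : ℝ} (hx : 0 ≤ x) (hν : 0 < ν) (hc : 0 < c) (hβ : 0 ≤ β)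
    (h : c * exp (-β) ≤ ν) : log (1 + x / ν) ≤ log (1 + x) + log (1 + 1 / c) + β := by
  have hinv : 1 / ν ≤ exp β / c := by
    rw [exp_neg, ← div_eq_mul_inv, div_le_iff₀ (exp_pos β)] at h
    rw [div_le_div_iff₀ hν hc]
    linarith
  have hbound : 1 + x / ν ≤ (1 + x) * ((1 + 1 / c) * exp β) := by
    have h1 : 1 + x / ν ≤ (1 + x) * (1 + 1 / ν) := by
      rw [mul_add, mul_one, add_mul, one_mul, mul_one_div]
      linarith [one_div_pos.2 hν]
    have h2 : 1 + 1 / ν ≤ (1 + 1 / c) * exp β := by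
      have := one_le_exp hβ
      rw [add_mul, one_mul, one_div_mul_eq_div]
      linarith
    exact h1.trans (mul_le_mul_of_nonneg_left h2 (by linarith))
  calc log (1 + x / ν) ≤ log ((1 + x) * ((1 + 1 / c) * exp β)) :=
        log_le_log (by positivity) hbound
    _ = log (1 + x) + log (1 + 1 / c) + β := by
        rw [log_mul (by positivity) (by positivity), log_mul (by positivity) (exp_ne_zero β),
          log_exp, add_assoc]

theorem isLittleO_log_one_add_add_rpow_mul {r α : ℝ} (hr : 0 < r) (hα : 0 < α) (C : ℝ) :
    (fun x : ℝ => log (1 + x) + C + x ^ r * log (1 + x) ^ (-α)) =o[atTop] fun x => x ^ r := by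
  have hshift : (fun x : ℝ => (1 + x) ^ r) =O[atTop] fun x => x ^ r := by
    refine IsBigO.of_bound (2 ^ r) ?_
    filter_upwards [eventually_ge_atTop 1] with x hx
    rw [norm_of_nonneg (by positivity), norm_of_nonneg (by positivity), ← mul_rpow zero_le_two
      (by positivity)]
    exact rpow_le_rpow (by positivity) (by linarith) hr.le
  have hlog : (fun x : ℝ => log (1 + x)) =o[atTop] fun x => x ^ r :=
    ((isLittleO_log_rpow_atTop hr).comp_tendsto
      (tendsto_atTop_add_const_left _ 1 tendsto_id)).trans_isBigO hshift
  have hconst : (fun _ : ℝ => C) =o[atTop] fun x => x ^ r :=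
    isLittleO_const_left.2 <| Or.inr <|
      tendsto_norm_atTop_atTop.comp (tendsto_rpow_atTop hr)
  have hdecay : (fun x : ℝ => log (1 + x) ^ (-α)) =o[atTop] fun _ => (1 : ℝ) :=
    (isLittleO_one_iff ℝ).2 <| (tendsto_rpow_neg_atTop hα).comp <|
      tendsto_log_atTop.comp (tendsto_atTop_add_const_left _ 1 tendsto_id)
  have hmul : (fun x : ℝ => x ^ r * log (1 + x) ^ (-α)) =o[atTop] fun x => x ^ r := by
    simpa using (isBigO_refl (fun x : ℝ => x ^ r) _).mul_isLittleO hdecay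
  exact (hlog.add hconst).add hmul

theorem eventually_two_mul_log_pow_le {d : ℕ} {α c Cb : ℝ} (hα : 0 < α) (hc : 0 < c)
    (hCb : 0 < Cb) :
    ∀ᶠ T : ℕ in atTop, ∀ ν : ℝ, 0 < ν →
      c * exp (-(T : ℝ) ^ ((1 : ℝ) / ((d : ℝ) + 1)) * log (1 + (T : ℝ)) ^ (-α)) ≤ ν →
      2 * (Cb * log (1 + (T : ℝ) / ν) ^ (d + 1)) ≤ T := by
  set r : ℝ := 1 / ((d : ℝ) + 1)
  have hd : (0 : ℝ) < d + 1 := by positivity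
  have hsmall := (isLittleO_log_one_add_add_rpow_mul (by positivity : 0 < r) hα
    (log (1 + 1 / c))).def (by positivity : 0 < (2 * Cb) ^ (-r))
  filter_upwards [tendsto_natCast_atTop_atTop.eventually hsmall] with T hT ν hν hνc
  have hT0 : (0 : ℝ) ≤ T := T.cast_nonneg
  have hβ : 0 ≤ (T : ℝ) ^ r * log (1 + T) ^ (-α) :=
    mul_nonneg (by positivity) (rpow_nonneg (log_nonneg (by linarith)) _)
  rw [neg_mul] at hνc
  have hL := log_one_add_div_le hT0 hν hc hβ hνc
  have hbudget : log (1 + T / ν) ≤ (T / (2 * Cb)) ^ r := by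
    rw [div_rpow hT0 (by positivity), div_eq_inv_mul _ ((2 * Cb) ^ r),
      ← rpow_neg (by positivity)]
    refine hL.trans ((le_abs_self _).trans ?_)
    simpa [abs_of_nonneg (rpow_nonneg hT0 r)] using hT
  have hpow : log (1 + T / ν) ^ (d + 1) ≤ T / (2 * Cb) := by
    rw [show r = ((d : ℝ) + 1)⁻¹ from one_div _, le_rpow_inv_iff_of_pos
      (log_nonneg (by have := div_nonneg hT0 hν.le; linarith)) (by positivity) hd] at hbudget
    exact_mod_cast hbudget
  rw [le_div_iff₀ (by positivity)] at hpow
  linarith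

theorem sqrt_le_of_mul_log_one_add_div_le {s ν T γ : ℝ} (hs : 0 ≤ s) (hν : 0 < ν) (hT : 0 < T)
    (hlog : T * log (1 + s / ν) ≤ 2 * γ) (hγT : 2 * γ ≤ T) :
    √s ≤ 4 / T * √(ν * T * γ) := by
  have hsν : 0 ≤ s / ν := div_nonneg hs hν.le
  have hγ : 0 ≤ γ := by nlinarith [log_nonneg (by linarith : (1 : ℝ) ≤ 1 + s / ν)]
  have hratio : s / ν ≤ 2 * (2 * γ / T) :=
    le_two_mul_of_log_one_add_le hsν ((div_le_one hT).2 hγT) ((le_div_iff₀ hT).2 (by linarith))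
  have hs16 : s ≤ (4 / T) ^ 2 * (ν * T * γ) := by
    have hscale : (4 / T) ^ 2 * (ν * T * γ) = 4 * (ν * (2 * (2 * γ / T))) := by
      field_simp
      ring
    rw [div_le_iff₀ hν] at hratio
    rw [hscale]
    nlinarith [mul_nonneg hν.le (div_nonneg hγ hT.le)]
  calc √s ≤ √((4 / T) ^ 2 * (ν * T * γ)) := sqrt_le_sqrt hs16
    _ = 4 / T * √(ν * T * γ) := by rw [sqrt_mul (sq_nonneg _), sqrt_sq (by positivity)]

theorem mvr_posterior_variance_bound_SE_general
    (d : ℕ) (α : ℝ) (hα : 0 < α) (c : ℝ) (hc : 0 < c)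
    (Cb : ℝ) (hCb : 0 < Cb) :
    ∃ Tb : ℕ, 0 < Tb ∧
      ∀ (𝒳 : Type u) (k : 𝒳 → 𝒳 → ℝ), IsKernel k →
      (∀ m : ℕ, 0 < m → ∀ l : ℝ, 0 < l → ∀ Z : Fin m → 𝒳,
        infoGain k ((l ^ 2) • (1 : Matrix (Fin m) (Fin m) ℝ)) Z
          ≤ Cb * (Real.log (1 + (m : ℝ) / l ^ 2)) ^ (d + 1)) →
      ∀ lamBar : ℕ → ℝ, (∀ T, 0 < lamBar T) →
      (∀ T : ℕ, 0 < T →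
        c * Real.exp (-(T : ℝ) ^ ((1 : ℝ) / ((d : ℝ) + 1))
            * (Real.log (1 + (T : ℝ))) ^ (-α)) ≤ lamBar T ^ 2) →
      ∀ Xtil : Set 𝒳, Xtil.Nonempty →
      ∀ xs : ℕ → ℕ → 𝒳,
      (∀ T, 0 < T → ∀ t < T, xs T t ∈ Xtil) →
      (∀ T, 0 < T → ∀ t < T, ∀ x ∈ Xtil,
        postStd k ((lamBar T ^ 2) • (1 : Matrix (Fin t) (Fin t) ℝ)) (preT (xs T) t) x
          ≤ postStd k ((lamBar T ^ 2) • (1 : Matrix (Fin t) (Fin t) ℝ)) (preT (xs T) t)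
              (xs T t)) →
      ∀ T, Tb ≤ T → ∀ x ∈ Xtil,
        postStd k ((lamBar T ^ 2) • (1 : Matrix (Fin T) (Fin T) ℝ)) (preT (xs T) T) x
          ≤ (4 / (T : ℝ)) * Real.sqrt (lamBar T ^ 2 * T
              * (Cb * (Real.log (1 + (T : ℝ) / lamBar T ^ 2)) ^ (d + 1))) := by
  obtain ⟨N, hN⟩ := eventually_atTop.1 (eventually_two_mul_log_pow_le (d := d) hα hc hCb)
  refine ⟨N + 1, N.succ_pos, fun 𝒳 k hk hgain lamBar hlam hlamLower Xtil _ xs _ hmvr T hT x hx =>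
    ?_⟩
  have hT0 : 0 < T := by omega
  have hν : 0 < lamBar T ^ 2 := pow_pos (hlam T) 2
  have hmax : ∀ t < T, postVar k (lamBar T ^ 2 • 1) (preT (xs T) t) x
      ≤ postVar k (lamBar T ^ 2 • 1) (preT (xs T) t) (xs T t) := fun t ht =>
    (sqrt_le_sqrt_iff (postVar_nonneg hk hν _ _)).1 (hmvr T hT0 t ht x hx)
  have hlog := (card_mul_log_le_two_mul_infoGain hk hν (xs T) T x hmax).trans
    (mul_le_mul_of_nonneg_left (hgain T hT0 _ (hlam T) _) zero_le_two)
  exact sqrt_le_of_mul_log_one_add_div_le (postVar_nonneg hk hν _ x) hν (Nat.cast_pos.2 hT0)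
    hlog (hN T (by omega) _ hν (hlamLower T hT0))

/-- MVR posterior variance bound under the squared-exponential-type
information-gain bound, with `T̄` depending only on `c`, `C̄`, `α`, `d`. -/
theorem mvr_posterior_variance_bound_SE
    (d : ℕ) (hd : 0 < d) (α : ℝ) (hα : 0 < α) (c : ℝ) (hc : 0 < c)
    (Cb : ℝ) (hCb : 0 < Cb) :
    ∃ Tb : ℕ, 0 < Tb ∧
      ∀ (𝒳 : Type u) (k : 𝒳 → 𝒳 → ℝ), IsKernel k →
      (∀ m : ℕ, 0 < m → ∀ l : ℝ, 0 < l → ∀ Z : Fin m → 𝒳,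
        infoGain k ((l ^ 2) • (1 : Matrix (Fin m) (Fin m) ℝ)) Z
          ≤ Cb * (Real.log (1 + (m : ℝ) / l ^ 2)) ^ (d + 1)) →
      ∀ lamBar : ℕ → ℝ, (∀ T, 0 < lamBar T) →
      (∀ T : ℕ, 0 < T →
        c * Real.exp (-(T : ℝ) ^ ((1 : ℝ) / ((d : ℝ) + 1))
            * (Real.log (1 + (T : ℝ))) ^ (-α)) ≤ lamBar T ^ 2) →
      ∀ Xtil : Set 𝒳, Xtil.Nonempty →
      ∀ xs : ℕ → ℕ → 𝒳,
      (∀ T, 0 < T → ∀ t < T, xs T t ∈ Xtil) →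
      (∀ T, 0 < T → ∀ t < T, ∀ x ∈ Xtil,
        postStd k ((lamBar T ^ 2) • (1 : Matrix (Fin t) (Fin t) ℝ)) (preT (xs T) t) x
          ≤ postStd k ((lamBar T ^ 2) • (1 : Matrix (Fin t) (Fin t) ℝ)) (preT (xs T) t)
              (xs T t)) →
      ∀ T, Tb ≤ T → ∀ x ∈ Xtil,
        postStd k ((lamBar T ^ 2) • (1 : Matrix (Fin T) (Fin T) ℝ)) (preT (xs T) T) x
          ≤ (4 / (T : ℝ)) * Real.sqrt (lamBar T ^ 2 * T
              * (Cb * (Real.log (1 + (T : ℝ) / lamBar T ^ 2)) ^ (d + 1))) :=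
  mvr_posterior_variance_bound_SE_general d α hα c hc Cb hCb
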